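/- Let -1 < α < ∞. There is a constant C > 0 (depending only on α) such that for every nonnegative locally integrable function f on 𝓗 and every z ∈ 𝓗, P_α^+ f(z) ≤ C (Q_α^0 f(z) + Q_α^{1/3} f(z)), where P_α^+ f(z) = ∫_𝓗 f(w) |z − w̄|^{−(2+α)} dV_α(w) and Q_α^β f = Σ_{I ∈ 𝒟^β} (|I|^{−(2+α)} ∫_{Q_I} f dV_α) · 1_{Q_I}. -/

import Mathlib

noncomputable section

open MeasureTheory Complex Set
open scoped ENNReal

/-- The upper half-plane as a subset of `ℂ`. -/
def UHP : Set ℂ := {z : ℂ | 0 < z.im}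

/-- The weighted measure `dV_α = y^α dx dy` on the upper half-plane. -/
def Vm (α : ℝ) : Measure ℂ :=
  (volume.restrict UHP).withDensity fun z => ENNReal.ofReal (z.im ^ α)

/-- The `L^p(dV_α)` norm of a function on the upper half-plane. -/
def pnorm (α p : ℝ) (f : ℂ → ℂ) : ℝ :=
  ((∫⁻ z, ENNReal.ofReal (‖f z‖ ^ p) ∂(Vm α)).toReal) ^ (1 / p)

/-- Membership in the weighted Bergman space `A_α^p` of the upper half-plane:
holomorphy on `UHP` together with finiteness of the `p`-th power integral. -/
def MemAp (α p : ℝ) (f : ℂ → ℂ) : Prop :=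
  DifferentiableOn ℂ f UHP ∧
    (∫⁻ z, ENNReal.ofReal (‖f z‖ ^ p) ∂(Vm α)) < ⊤

/-- The Bergman projection `P_α h (z) = ∫ h(w) (z - w̄)^{-(2+α)} dV_α(w)`. -/
def Pberg (α : ℝ) (h : ℂ → ℂ) : ℂ → ℂ :=
  fun z => ∫ w, h w * (z - (starRingEnd ℂ) w) ^ (-(2 + α) : ℂ) ∂(Vm α)

/-- The normalized reproducing kernel `k_w^α(z) = v^{1+α/2} (z - w̄)^{-(2+α)}`, `v = Im w`. -/
def kk (α : ℝ) (w : ℂ) : ℂ → ℂ :=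
  fun z => ((w.im : ℂ) ^ ((1 + α / 2 : ℝ) : ℂ)) * (z - (starRingEnd ℂ) w) ^ (-(2 + α) : ℂ)

/-- The Toeplitz product `T_f T_ḡ h = P_α (f ⬝ P_α (ḡ h))`. -/
def T2 (α : ℝ) (f g : ℂ → ℂ) (h : ℂ → ℂ) : ℂ → ℂ :=
  Pberg α fun z => f z * Pberg α (fun w => (starRingEnd ℂ) (g w) * h w) z

/-- Boundedness of the Toeplitz product `T_f T_ḡ` on `A_α^p`. -/
def BoundedOn (α p : ℝ) (f g : ℂ → ℂ) : Prop :=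
  ∃ C : ℝ, 0 ≤ C ∧ ∀ h, MemAp α p h → pnorm α p (T2 α f g h) ≤ C * pnorm α p h

/-- The operator norm `‖T_f T_ḡ‖` on `A_α^p` (the least admissible constant). -/
def opNorm (α p : ℝ) (f g : ℂ → ℂ) : ℝ :=
  sInf {C : ℝ | 0 ≤ C ∧ ∀ h, MemAp α p h → pnorm α p (T2 α f g h) ≤ C * pnorm α p h}

/-- Invertibility of the Toeplitz product `T_f T_ḡ` on `A_α^p`: it maps `A_α^p` to
itself, is onto (modulo values off the half-plane), and has a bounded inverse
(equivalently, is bounded below). -/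
def InvertibleOn (α p : ℝ) (f g : ℂ → ℂ) : Prop :=
  (∀ h, MemAp α p h → MemAp α p (T2 α f g h)) ∧
  (∀ u, MemAp α p u → ∃ h, MemAp α p h ∧ ∀ z ∈ UHP, T2 α f g h z = u z) ∧
  (∃ c : ℝ, 0 < c ∧ ∀ h, MemAp α p h → c * pnorm α p h ≤ pnorm α p (T2 α f g h))

/-- The quantity `[f,g]_{p,α} = sup_{w ∈ 𝓗} ‖f k_w^α‖_{p,α} ‖g k_w^α‖_{q,α}`. -/
def br (α p q : ℝ) (f g : ℂ → ℂ) : ℝ :=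
  ⨆ w : ↥UHP, pnorm α p (fun z => f z * kk α (w : ℂ) z) *
    pnorm α q (fun z => g z * kk α (w : ℂ) z)

/-- The family whose supremum is `[f,g]_{p,α}`. -/
def brFam (α p q : ℝ) (f g : ℂ → ℂ) : ↥UHP → ℝ :=
  fun w => pnorm α p (fun z => f z * kk α (w : ℂ) z) *
    pnorm α q (fun z => g z * kk α (w : ℂ) z)

/-- The Carleson box over the dyadic interval `2^j([m + (−1)^j β, m + (−1)^j β + 1))`
of the shifted dyadic grid `𝒟^β`. -/
def dyBox (β : ℝ) (j m : ℤ) : Set ℂ :=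
  {z : ℂ | ((2 : ℝ) ^ j * ((m : ℝ) + (-1 : ℝ) ^ j * β) ≤ z.re ∧
      z.re < (2 : ℝ) ^ j * ((m : ℝ) + (-1 : ℝ) ^ j * β) + (2 : ℝ) ^ j) ∧
    0 < z.im ∧ z.im < (2 : ℝ) ^ j}

/-- The positive Bergman operator `P_α^+ f(z) = ∫ f(w) |z − w̄|^{−(2+α)} dV_α(w)`,
for nonnegative `f`, valued in `ℝ≥0∞`. -/
def Pplus (α : ℝ) (f : ℂ → ℝ) (z : ℂ) : ℝ≥0∞ :=
  ∫⁻ w, ENNReal.ofReal (f w) *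
    ENNReal.ofReal (‖z - (starRingEnd ℂ) w‖ ^ (-(2 + α))) ∂(Vm α)

/-- The dyadic positive operator
`Q_α^β f = Σ_{I ∈ 𝒟^β} (|I|^{−(2+α)} ∫_{Q_I} f dV_α) 1_{Q_I}`, valued in `ℝ≥0∞`. -/
def Qop (α β : ℝ) (f : ℂ → ℝ) (z : ℂ) : ℝ≥0∞ :=
  ∑' jm : ℤ × ℤ,
    (dyBox β jm.1 jm.2).indicator
      (fun _ => ENNReal.ofReal (((2 : ℝ) ^ jm.1) ^ (-(2 + α))) *
        ∫⁻ w in dyBox β jm.1 jm.2, ENNReal.ofReal (f w) ∂(Vm α)) z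

/-!
Fix `z, w ∈ 𝓗` and let `D = |z - w̄|`, which dominates `Im z`, `Im w` and `|Re z - Re w|`.
Pick a dyadic length `2^j ∈ (12D, 24D]`. At any scale, every point of `ℝ` lies in the middle
two thirds of an interval of `𝒟^0` or of `𝒟^{1/3}` (the two grids are offset by a third), so
`Re z` and `Re w`, being `2^j/12`-close, lie in one interval `I` of length `2^j` of one of the
grids, and `z, w ∈ Q_I`. Hence `|z - w̄|^{-(2+α)} ≤ 24^{2+α} |I|^{-(2+α)}` is dominated by the
kernels of `Q_α^0` and `Q_α^{1/3}`, and integrating against `f dV_α` gives the claim.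
-/

open ComplexConjugate

theorem measurableSet_dyBox (β : ℝ) (j m : ℤ) : MeasurableSet (dyBox β j m) :=
  ((measurableSet_le measurable_const Complex.measurable_re).inter
      (measurableSet_lt Complex.measurable_re measurable_const)).inter
    ((measurableSet_lt measurable_const Complex.measurable_im).inter
      (measurableSet_lt Complex.measurable_im measurable_const))

theorem ae_mem_UHP (α : ℝ) : ∀ᵐ w ∂(Vm α), w ∈ UHP :=
  withDensity_absolutelyContinuous _ _ |>.ae_le <|
    ae_restrict_mem (measurableSet_lt measurable_const Complex.measurable_im)

theorem abs_re_sub_re_le_norm_sub_conj (z w : ℂ) : |z.re - w.re| ≤ ‖z - conj w‖ := by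
  simpa using Complex.abs_re_le_norm (z - conj w)

theorem im_add_im_le_norm_sub_conj (z w : ℂ) : z.im + w.im ≤ ‖z - conj w‖ := by
  simpa using (le_abs_self _).trans (Complex.abs_im_le_norm (z - conj w))

theorem exists_int_sixths_or_shifted (u : ℝ) {s : ℝ} (hs : s = 1 / 3 ∨ s = -(1 / 3)) :
    ∃ t, (t = 0 ∨ t = s) ∧ ∃ m : ℤ, m + t + 1 / 6 ≤ u ∧ u ≤ m + t + 5 / 6 := by
  have h₀ := Int.floor_le u
  have h₁ := Int.lt_floor_add_one u
  by_cases hl : ⌊u⌋ + 1 / 6 ≤ u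
  · by_cases hr : u ≤ ⌊u⌋ + 5 / 6
    · exact ⟨0, .inl rfl, ⌊u⌋, by linarith, by linarith⟩
    rcases hs with rfl | rfl
    · exact ⟨_, .inr rfl, ⌊u⌋, by linarith, by linarith⟩
    · exact ⟨_, .inr rfl, ⌊u⌋ + 1, by push_cast; linarith, by push_cast; linarith⟩
  rcases hs with rfl | rfl
  · exact ⟨_, .inr rfl, ⌊u⌋ - 1, by push_cast; linarith, by push_cast; linarith⟩
  · exact ⟨_, .inr rfl, ⌊u⌋, by linarith, by linarith⟩

theorem exists_Ico_mem_mem_of_shift {E s p q : ℝ} (hE : 0 < E) (hs : s = 1 / 3 ∨ s = -(1 / 3))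
    (hpq : 12 * |p - q| ≤ E) :
    ∃ t, (t = 0 ∨ t = s) ∧ ∃ m : ℤ,
      p ∈ Ico (E * (m + t)) (E * (m + t) + E) ∧ q ∈ Ico (E * (m + t)) (E * (m + t) + E) := by
  obtain ⟨t, ht, m, hm₁, hm₂⟩ := exists_int_sixths_or_shifted (p / E) hs
  have hp₁ : E * (m + t + 1 / 6) ≤ p := (le_div_iff₀' hE).mp hm₁
  have hp₂ : p ≤ E * (m + t + 5 / 6) := (div_le_iff₀' hE).mp hm₂
  obtain ⟨hq₁, hq₂⟩ := abs_sub_le_iff.mp (show |p - q| ≤ E / 12 by linarith)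
  exact ⟨t, ht, m, ⟨by linarith, by linarith⟩, ⟨by linarith, by linarith⟩⟩

theorem exists_dyBox_mem_mem {z w : ℂ} (hz : 0 < z.im) (hw : 0 < w.im) :
    ∃ β : ℝ, (β = 0 ∨ β = 1 / 3) ∧ ∃ j m : ℤ,
      z ∈ dyBox β j m ∧ w ∈ dyBox β j m ∧ (2 : ℝ) ^ j ≤ 24 * ‖z - conj w‖ := by
  set D := ‖z - conj w‖
  have hzD : z.im < D := by linarith [im_add_im_le_norm_sub_conj z w]
  have hwD : w.im < D := by linarith [im_add_im_le_norm_sub_conj z w]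
  obtain ⟨j, hj₁, hj₂⟩ := exists_mem_Ico_zpow (show 0 < 24 * D by linarith) one_lt_two
  have hjD : 12 * D < 2 ^ j := by
    rw [zpow_add_one₀ two_ne_zero] at hj₂; linarith
  have hs : (-1 : ℝ) ^ j * (1 / 3) = 1 / 3 ∨ (-1 : ℝ) ^ j * (1 / 3) = -(1 / 3) := by
    rcases j.even_or_odd with hj | hj <;> simp [hj.neg_one_zpow]
  obtain ⟨t, ht, m, hzm, hwm⟩ := exists_Ico_mem_mem_of_shift (zpow_pos two_pos j) hs
    (p := z.re) (q := w.re) (by linarith [abs_re_sub_re_le_norm_sub_conj z w])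
  have hβ : ∃ β : ℝ, (β = 0 ∨ β = 1 / 3) ∧ t = (-1 : ℝ) ^ j * β := by
    rcases ht with rfl | rfl
    exacts [⟨0, .inl rfl, by simp⟩, ⟨1 / 3, .inr rfl, rfl⟩]
  obtain ⟨β, hβ, rfl⟩ := hβ
  exact ⟨β, hβ, j, m, ⟨hzm, hz, by linarith⟩, ⟨hwm, hw, by linarith⟩, hj₁⟩

theorem rpow_neg_le_mul_rpow_neg {s A E c : ℝ} (hs : 0 ≤ s) (hA : 0 < A) (hE : 0 < E) (hc : 0 < c)
    (h : E ≤ c * A) : A ^ (-s) ≤ c ^ s * E ^ (-s) :=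
  calc A ^ (-s) = c ^ s * (c * A) ^ (-s) := by
        rw [Real.mul_rpow hc.le hA.le, Real.rpow_neg hc.le, ← mul_assoc,
          mul_inv_cancel₀ (Real.rpow_pos_of_pos hc s).ne', one_mul]
    _ ≤ c ^ s * E ^ (-s) := mul_le_mul_of_nonneg_left
        (Real.rpow_le_rpow_of_nonpos hE h (neg_nonpos.mpr hs)) (by positivity)

def dyadicKernel (α β : ℝ) (z w : ℂ) : ℝ≥0∞ :=
  ∑' jm : ℤ × ℤ, (dyBox β jm.1 jm.2).indicator
      (fun _ => ENNReal.ofReal (((2 : ℝ) ^ jm.1) ^ (-(2 + α)))) z *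
    (dyBox β jm.1 jm.2).indicator 1 w

theorem measurable_dyadicKernel (α β : ℝ) (z : ℂ) : Measurable (dyadicKernel α β z) :=
  .tsum fun jm => measurable_const.mul
    (measurable_const.indicator (measurableSet_dyBox β jm.1 jm.2))

theorem Qop_eq_lintegral_mul_dyadicKernel (α β : ℝ) {f : ℂ → ℝ}
    (hf : AEMeasurable (fun w => ENNReal.ofReal (f w)) (Vm α)) (z : ℂ) :
    Qop α β f z = ∫⁻ w, ENNReal.ofReal (f w) * dyadicKernel α β z w ∂(Vm α) := by
  have hB (jm : ℤ × ℤ) := measurableSet_dyBox β jm.1 jm.2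
  have hterm (jm : ℤ × ℤ) (w : ℂ) : ENNReal.ofReal (f w) *
      ((dyBox β jm.1 jm.2).indicator (fun _ => ENNReal.ofReal (((2 : ℝ) ^ jm.1) ^ (-(2 + α)))) z *
        (dyBox β jm.1 jm.2).indicator 1 w) =
      (dyBox β jm.1 jm.2).indicator (fun _ => ENNReal.ofReal (((2 : ℝ) ^ jm.1) ^ (-(2 + α)))) z *
        (dyBox β jm.1 jm.2).indicator (fun w => ENNReal.ofReal (f w)) w := by
    by_cases hw : w ∈ dyBox β jm.1 jm.2 <;> simp [hw, mul_comm]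
  simp_rw [dyadicKernel, ← ENNReal.tsum_mul_left, hterm]
  rw [lintegral_tsum fun jm => (hf.indicator (hB jm)).const_mul _, Qop]
  refine tsum_congr fun jm => ?_
  rw [lintegral_const_mul'' _ (hf.indicator (hB jm)), lintegral_indicator (hB jm),
    Set.indicator_mul_left]

theorem ofReal_norm_sub_conj_rpow_le {α : ℝ} (hα : -2 ≤ α) {z w : ℂ} (hz : 0 < z.im)
    (hw : 0 < w.im) :
    ENNReal.ofReal (‖z - conj w‖ ^ (-(2 + α))) ≤
      ENNReal.ofReal (24 ^ (2 + α)) * (dyadicKernel α 0 z w + dyadicKernel α (1 / 3) z w) := by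
  obtain ⟨β, hβ, j, m, hzB, hwB, hj⟩ := exists_dyBox_mem_mem hz hw
  have hterm : ENNReal.ofReal (((2 : ℝ) ^ j) ^ (-(2 + α))) ≤ dyadicKernel α β z w := by
    refine le_of_eq_of_le ?_ (ENNReal.le_tsum (j, m))
    simp [hzB, hwB]
  calc ENNReal.ofReal (‖z - conj w‖ ^ (-(2 + α)))
      ≤ ENNReal.ofReal (24 ^ (2 + α) * ((2 : ℝ) ^ j) ^ (-(2 + α))) := by
        refine ENNReal.ofReal_le_ofReal (rpow_neg_le_mul_rpow_neg (by linarith) ?_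
          (zpow_pos two_pos j) (by norm_num) hj)
        linarith [im_add_im_le_norm_sub_conj z w]
    _ = ENNReal.ofReal (24 ^ (2 + α)) * ENNReal.ofReal (((2 : ℝ) ^ j) ^ (-(2 + α))) :=
        ENNReal.ofReal_mul (by positivity)
    _ ≤ _ := by
        gcongr
        rcases hβ with rfl | rfl
        exacts [le_add_right hterm, le_add_left hterm]

/-- For `-1 < α` there is `C > 0` depending only on `α` such that for every
nonnegative locally integrable `f` on `𝓗` and every `z ∈ 𝓗`,
`P_α^+ f(z) ≤ C (Q_α^0 f(z) + Q_α^{1/3} f(z))`. -/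
theorem statement9 (α : ℝ) (hα : -1 < α) :
    ∃ C : ℝ, 0 < C ∧ ∀ f : ℂ → ℝ, (∀ z, 0 ≤ f z) →
      MeasureTheory.LocallyIntegrableOn f UHP MeasureTheory.volume →
      ∀ z ∈ UHP, Pplus α f z ≤ ENNReal.ofReal C * (Qop α 0 f z + Qop α (1 / 3) f z) := by
  refine ⟨24 ^ (2 + α), by positivity, fun f _ hloc z hz => ?_⟩
  have hf : AEMeasurable (fun w => ENNReal.ofReal (f w)) (Vm α) :=
    (ENNReal.measurable_ofReal.comp_aemeasurable hloc.aestronglyMeasurable.aemeasurable).mono_ac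
      (withDensity_absolutelyContinuous _ _)
  have hf₀ : AEMeasurable (fun w => ENNReal.ofReal (f w) * dyadicKernel α 0 z w) (Vm α) :=
    hf.mul (measurable_dyadicKernel α 0 z).aemeasurable
  rw [Qop_eq_lintegral_mul_dyadicKernel α 0 hf, Qop_eq_lintegral_mul_dyadicKernel α (1 / 3) hf,
    ← lintegral_add_left' hf₀,
    ← lintegral_const_mul' _ _ ENNReal.ofReal_ne_top, Pplus]
  refine lintegral_mono_ae <| (ae_mem_UHP α).mono fun w hw => ?_
  calc ENNReal.ofReal (f w) * ENNReal.ofReal (‖z - conj w‖ ^ (-(2 + α)))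
      ≤ ENNReal.ofReal (f w) * (ENNReal.ofReal (24 ^ (2 + α)) *
          (dyadicKernel α 0 z w + dyadicKernel α (1 / 3) z w)) := by
        gcongr
        exact ofReal_norm_sub_conj_rpow_le (by linarith) hz hw
    _ = _ := by ring
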